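/- Let ρ > 0 and t₀ ∈ ℚ with t₀ > 0, and let P_n(t) = ∑_{k=0}^{n} (ρt)^k / k!. Then the set L_n = {(y,t) ∈ ℝ² : y ≥ P_n(t), 0 ≤ t ≤ t₀} ∪ {(y,t) : t > t₀} is invariant under the flow (y,t) ↦ (e^{ρδ}·y, t + δ) for every δ ≥ 0, and contains the orbit {(e^{ρt}, t) : t ≥ 0}. -/

import Mathlib

/-!
The truncated exponential `P_n(x) = ∑_{k ≤ n} x^k / k!` is sub-multiplicative on `[0, ∞)`:
expanding `(x + y)^m / m!` binomially writes `P_n(x + y)` as the part `i + j ≤ n` of the Cauchy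
product of `P_n(x)` and `P_n(y)`, and all dropped terms are nonnegative. Hence
`P_n(ρ(t + δ)) ≤ e^{ρδ} P_n(ρt)`, so the flow preserves `y ≥ P_n(ρt)` while `t ≤ t₀`; beyond `t₀`
the set is a half-plane the flow cannot leave. The orbit lies in the set since `P_n ≤ exp`.
-/

open Finset Nat

theorem sum_range_cauchy_product_le_mul {R : Type*} [CommSemiring R] [PartialOrder R]
    [IsOrderedRing R] {f g : ℕ → R} (hf : ∀ i, 0 ≤ f i) (hg : ∀ j, 0 ≤ g j) (N : ℕ) :
    ∑ m ∈ range N, ∑ k ∈ range (m + 1), f k * g (m - k) ≤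
      (∑ i ∈ range N, f i) * ∑ j ∈ range N, g j := by
  rw [sum_range_diag_flip N fun k l => f k * g l, sum_mul]
  gcongr with i
  rw [← mul_sum]
  exact mul_le_mul_of_nonneg_left
    (sum_le_sum_of_subset_of_nonneg (range_subset_range.2 (Nat.sub_le N i))
      fun j _ _ => hg j) (hf i)

theorem add_pow_div_factorial {K : Type*} [Field K] [CharZero K] (x y : K) (m : ℕ) :
    (x + y) ^ m / m ! = ∑ k ∈ range (m + 1), x ^ k / k ! * (y ^ (m - k) / (m - k)!) := by
  rw [add_pow, sum_div]
  refine sum_congr rfl fun k hk => ?_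
  rw [cast_choose K (Nat.le_of_lt_succ (mem_range.1 hk))]
  have := factorial_ne_zero m
  field_simp

noncomputable def truncExp {K : Type*} [Field K] (n : ℕ) (x : K) : K :=
  ∑ k ∈ range (n + 1), x ^ k / k !

theorem truncExp_add_le_mul {K : Type*} [Field K] [LinearOrder K] [IsStrictOrderedRing K]
    (n : ℕ) {x y : K} (hx : 0 ≤ x) (hy : 0 ≤ y) :
    truncExp n (x + y) ≤ truncExp n x * truncExp n y := by
  simp only [truncExp, add_pow_div_factorial]
  exact sum_range_cauchy_product_le_mul (f := fun i => x ^ i / i !) (g := fun j => y ^ j / j !)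
    (fun i => by positivity) (fun j => by positivity) _

theorem truncExp_nonneg {K : Type*} [Field K] [LinearOrder K] [IsStrictOrderedRing K]
    (n : ℕ) {x : K} (hx : 0 ≤ x) : 0 ≤ truncExp n x :=
  sum_nonneg fun k _ => by positivity

theorem truncExp_le_exp (n : ℕ) {x : ℝ} (hx : 0 ≤ x) : truncExp n x ≤ Real.exp x :=
  Real.sum_le_exp_of_nonneg hx _

theorem truncExp_add_le_exp_mul (n : ℕ) {x y : ℝ} (hx : 0 ≤ x) (hy : 0 ≤ y) :
    truncExp n (x + y) ≤ Real.exp y * truncExp n x :=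
  calc truncExp n (x + y) ≤ truncExp n x * truncExp n y := truncExp_add_le_mul n hx hy
    _ ≤ truncExp n x * Real.exp y :=
      mul_le_mul_of_nonneg_left (truncExp_le_exp n hy) (truncExp_nonneg n hx)
    _ = Real.exp y * truncExp n x := mul_comm _ _

theorem underapprox_set_invariant_general (ρ : ℝ) (hρ : 0 < ρ) (t₀ : ℚ) (n : ℕ)
    (L : Set (ℝ × ℝ))
    (hL : L = {p : ℝ × ℝ |
        (∑ k ∈ Finset.range (n + 1), (ρ * p.2) ^ k / (Nat.factorial k) ≤ p.1 ∧
          0 ≤ p.2 ∧ p.2 ≤ (t₀ : ℝ))} ∪ {p : ℝ × ℝ | (t₀ : ℝ) < p.2}) :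
    (∀ δ : ℝ, 0 ≤ δ → ∀ p ∈ L, (Real.exp (ρ * δ) * p.1, p.2 + δ) ∈ L) ∧
      (∀ t : ℝ, 0 ≤ t → (Real.exp (ρ * t), t) ∈ L) := by
  subst hL
  refine ⟨?_, fun t ht => ?_⟩
  · rintro δ hδ ⟨y, t⟩ (⟨hy, ht, -⟩ | hlt)
    · rcases le_or_gt (t + δ) t₀ with hle | hlt
      · refine Or.inl ⟨?_, by positivity, hle⟩
        calc truncExp n (ρ * (t + δ)) = truncExp n (ρ * t + ρ * δ) := by rw [mul_add]
          _ ≤ Real.exp (ρ * δ) * truncExp n (ρ * t) :=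
            truncExp_add_le_exp_mul n (by positivity) (by positivity)
          _ ≤ Real.exp (ρ * δ) * y := 
            mul_le_mul_of_nonneg_left hy (Real.exp_pos _).le
      · exact Or.inr hlt
    · exact Or.inr (lt_add_of_lt_of_nonneg hlt hδ)
  · rcases le_or_gt t t₀ with hle | hlt
    · exact Or.inl ⟨truncExp_le_exp n (by positivity), ht, hle⟩
    · exact Or.inr hlt

theorem underapprox_set_invariant (ρ : ℝ) (hρ : 0 < ρ) (t₀ : ℚ) (ht₀ : 0 < t₀) (n : ℕ)
    (L : Set (ℝ × ℝ))
    (hL : L = {p : ℝ × ℝ |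
        (∑ k ∈ Finset.range (n + 1), (ρ * p.2) ^ k / (Nat.factorial k) ≤ p.1 ∧
          0 ≤ p.2 ∧ p.2 ≤ (t₀ : ℝ))} ∪ {p : ℝ × ℝ | (t₀ : ℝ) < p.2}) :
    (∀ δ : ℝ, 0 ≤ δ → ∀ p ∈ L, (Real.exp (ρ * δ) * p.1, p.2 + δ) ∈ L) ∧
      (∀ t : ℝ, 0 ≤ t → (Real.exp (ρ * t), t) ∈ L) :=
  underapprox_set_invariant_general ρ hρ t₀ n L hL
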